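/- arXiv:1403.8017 — 2 statements merged into one kernel-verified Lean document; each statement's English description precedes it below -/
import Mathlib

section
/- Let b > 0 and α < 0 be real numbers, let ℓ ≥ 1 be a fixed integer, and set r = r(n) = b·n^α. Define G_ℓ(n) = (Γ((n-ℓ)/r + 1)/Γ((n-ℓ)/2 + 1)) · (Γ(n/2 + 1)/Γ(n/r + 1))^{(n-ℓ)/n}. Then lim_{n→∞} G_ℓ(n) = 0. (G_ℓ(n) equals the expected (n-ℓ)-dimensional volume E V_{n-ℓ}(Z_0 ∩ L) of the section of the zero cell Z_0, normalized so that E V_n(Z_0) = 1, with an (n-ℓ)-dimensional subspace L.) -/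
/-!
Put `t = (n - ℓ)/n`, `m = n/2`, `x = n/r` and `h_t(u) = log Γ(tu + 1) - t log Γ(u + 1)`; then
`G_ℓ(n) = exp (h_t(x) - h_t(m))`. Log-convexity of `Γ` makes `h_t` antitone, and together with
`Γ(s + 1) = s Γ(s)` it makes `h_t` drop by at least `t(1 - t)/2` over every unit step beyond `1`.
Since `t(1 - t) ~ ℓ/n` while `x - m ~ n^{1-α}/b`, the exponent is at most about `-ℓ n^{-α}/(2b)`,
which tends to `-∞` because `α < 0`.
-/

open Real Filter Set

theorem ConvexOn.antitoneOn_comp_mul_sub_mul {f : ℝ → ℝ} (hf : ConvexOn ℝ (Ici 0) f) {t : ℝ}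
    (ht0 : 0 < t) (ht1 : t ≤ 1) : AntitoneOn (fun u => f (t * u) - t * f u) (Ici 0) := by
  intro u (hu : 0 ≤ u) v (hv : 0 ≤ v) huv
  rcases huv.eq_or_lt with rfl | huv
  · rfl
  have htu : t * u ≤ u := mul_le_of_le_one_left hu ht1
  have htv : t * v ≤ v := mul_le_of_le_one_left hv ht1
  have htuv : t * u < t * v := mul_lt_mul_of_pos_left huv ht0
  have hslope : slope f (t * u) (t * v) ≤ slope f u v := calc
    slope f (t * u) (t * v) ≤ slope f (t * u) v :=
      hf.slope_mono (by positivity : 0 ≤ t * u) ⟨(by positivity : 0 ≤ t * v), htuv.ne'⟩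
        ⟨hv, (htu.trans_lt huv).ne'⟩ htv
    _ = slope f v (t * u) := slope_comm ..
    _ ≤ slope f v u := hf.slope_mono hv ⟨(by positivity : 0 ≤ t * u), (htu.trans_lt huv).ne⟩
        ⟨hu, huv.ne⟩ htu
    _ = slope f u v := slope_comm ..
  rw [slope_def_field, slope_def_field, ← mul_sub,
    div_le_div_iff₀ (by nlinarith) (by linarith)] at hslope
  have : 0 < v - u := by linarith
  show f (t * v) - t * f v ≤ f (t * u) - t * f u
  nlinarith

theorem convexOn_log_Gamma_add_one : ConvexOn ℝ (Ici 0) (fun v => log (Gamma (v + 1))) :=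
  (convexOn_log_Gamma.translate_left 1).subset (fun v (hv : 0 ≤ v) => by simp; linarith)
    (convex_Ici 0)

theorem log_Gamma_add_one {s : ℝ} (hs : 0 < s) :
    log (Gamma (s + 1)) = log (Gamma s) + log s := by
  rw [Gamma_add_one hs.ne', log_mul hs.ne' (Gamma_pos_of_pos hs).ne', add_comm]

noncomputable def logGammaDefect (t u : ℝ) : ℝ :=
  log (Gamma (t * u + 1)) - t * log (Gamma (u + 1))

theorem antitoneOn_logGammaDefect {t : ℝ} (ht0 : 0 < t) (ht1 : t ≤ 1) :
    AntitoneOn (logGammaDefect t) (Ici 0) :=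
  convexOn_log_Gamma_add_one.antitoneOn_comp_mul_sub_mul ht0 ht1

theorem logGammaDefect_add_one_le {t u : ℝ} (ht0 : 0 ≤ t) (ht1 : t ≤ 1) (hu : 1 ≤ u) :
    logGammaDefect t (u + 1) ≤ logGammaDefect t u - t * (1 - t) / 2 := by
  have htu : 0 ≤ t * u := by positivity
  have hconv : log (Gamma (t * (u + 1) + 1)) ≤ log (Gamma (t * u + 1)) + t * log (t * u + 1) := by
    have h := convexOn_log_Gamma_add_one.2 (x := t * u) (y := t * u + 1) htu
      (show 0 ≤ t * u + 1 by positivity) (by linarith : 0 ≤ 1 - t) ht0 (by ring)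
    simp only [smul_eq_mul] at h
    rw [show (1 - t) * (t * u) + t * (t * u + 1) = t * (u + 1) by ring,
      log_Gamma_add_one (by positivity : 0 < t * u + 1)] at h
    linarith
  have hlog : log (t * u + 1) - log (u + 1) ≤ -(1 - t) / 2 := by
    have hpos : 0 < (t * u + 1) / (u + 1) := by positivity
    have h := log_le_sub_one_of_pos hpos
    rw [log_div (by positivity) (by positivity)] at h
    have : (t * u + 1) / (u + 1) - 1 ≤ -(1 - t) / 2 := by
      rw [div_sub_one (by positivity), div_le_div_iff₀ (by positivity) (by norm_num)]
      nlinarith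
    linarith
  have hrec := log_Gamma_add_one (by linarith : 0 < u + 1)
  unfold logGammaDefect
  nlinarith

theorem le_sub_floor_mul_of_antitoneOn {g : ℝ → ℝ} {m c x : ℝ} (hg : AntitoneOn g (Ici m))
    (hstep : ∀ u, m ≤ u → g (u + 1) ≤ g u - c) (hx : m ≤ x) :
    g x ≤ g m - ⌊x - m⌋₊ * c := by
  have hchain : ∀ k : ℕ, g (m + k) ≤ g m - k * c := by
    intro k
    induction k with
    | zero => simp
    | succ k ih =>
      have := hstep (m + k) (by simp)
      push_cast
      rw [← add_assoc]
      linarith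
  have hk : (⌊x - m⌋₊ : ℝ) ≤ x - m := Nat.floor_le (by linarith)
  exact (hg (by simp : m ≤ m + ⌊x - m⌋₊) hx (by linarith)).trans (hchain _)

theorem logGammaDefect_sub_le {t m x : ℝ} (ht0 : 0 < t) (ht1 : t ≤ 1) (hm : 1 ≤ m)
    (hx : m ≤ x) :
    logGammaDefect t x - logGammaDefect t m ≤ -((x - m - 1) * (t * (1 - t) / 2)) := by
  have h := le_sub_floor_mul_of_antitoneOn
    ((antitoneOn_logGammaDefect ht0 ht1).mono (Ici_subset_Ici.2 (by linarith)))
    (fun u hu => logGammaDefect_add_one_le ht0.le ht1 (hm.trans hu)) hx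
  have hfloor : x - m - 1 ≤ ⌊x - m⌋₊ := (Nat.sub_one_lt_floor _).le
  have hc : 0 ≤ t * (1 - t) / 2 := by nlinarith
  nlinarith

theorem Gamma_ratio_eq_exp_logGammaDefect {t m x : ℝ} (ht : 0 ≤ t) (hm : 0 ≤ m) (hx : 0 ≤ x) :
    Gamma (t * x + 1) / Gamma (t * m + 1) * (Gamma (m + 1) / Gamma (x + 1)) ^ t =
      exp (logGammaDefect t x - logGammaDefect t m) := by
  have hpos : ∀ v : ℝ, 0 ≤ v → 0 < Gamma (v + 1) := fun v hv => Gamma_pos_of_pos (by linarith)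
  have h1 := hpos _ (mul_nonneg ht hx)
  have h2 := hpos _ (mul_nonneg ht hm)
  have h3 := hpos _ hm
  have h4 := hpos _ hx
  rw [← exp_log (by positivity : 0 < Gamma (t * x + 1) / Gamma (t * m + 1) *
    (Gamma (m + 1) / Gamma (x + 1)) ^ t)]
  congr 1
  rw [log_mul (by positivity) (by positivity), log_div h1.ne' h2.ne',
    log_rpow (div_pos h3 h4), log_div h3.ne' h4.ne']
  unfold logGammaDefect
  ring

theorem tendsto_div_rpow_sub_div_atTop {b α : ℝ} (hb : 0 < b) (hα : α < 0) :
    Tendsto (fun n : ℕ => ((n : ℝ) / (b * (n : ℝ) ^ α) - n / 2 - 1) / n) atTop atTop := by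
  have h := ((tendsto_rpow_atTop (neg_pos.2 hα)).comp tendsto_natCast_atTop_atTop
    |>.atTop_div_const hb).atTop_add
    ((tendsto_const_nhds (x := -(1 / 2 : ℝ))).sub tendsto_one_div_atTop_nhds_zero_nat)
  refine h.congr' ?_
  filter_upwards [eventually_gt_atTop 0] with n hn
  have hn : (0 : ℝ) < n := by exact_mod_cast hn
  simp only [Function.comp_apply, rpow_neg hn.le]
  field_simp
  ring

theorem tendsto_natCast_mul_mul_one_sub (ℓ : ℝ) :
    Tendsto (fun n : ℕ => n * ((n - ℓ) / n * (1 - (n - ℓ) / n))) atTop (nhds ℓ) := by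
  have h := (tendsto_const_nhds (x := ℓ)).sub
    (tendsto_one_div_atTop_nhds_zero_nat.const_mul (ℓ ^ 2))
  rw [mul_zero, sub_zero] at h
  refine h.congr' ?_
  filter_upwards [eventually_gt_atTop 0] with n hn
  have hn : (0 : ℝ) < n := by exact_mod_cast hn
  field_simp
  ring

/-- For `b > 0`, `α < 0`, `r = b n^α` and fixed `ℓ ≥ 1`, the expected sectional volume
`G_ℓ(n) = (Γ((n-ℓ)/r + 1)/Γ((n-ℓ)/2 + 1)) (Γ(n/2 + 1)/Γ(n/r + 1))^{(n-ℓ)/n}` tends to `0`. -/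
theorem limit_sectional_volume_alpha_neg (b α : ℝ) (hb : 0 < b) (hα : α < 0)
    (ℓ : ℕ) (hℓ : 1 ≤ ℓ) :
    Filter.Tendsto
      (fun n : ℕ =>
        (Real.Gamma (((n : ℝ) - ℓ) / (b * (n : ℝ) ^ α) + 1) /
            Real.Gamma (((n : ℝ) - ℓ) / 2 + 1)) *
          (Real.Gamma ((n : ℝ) / 2 + 1) / Real.Gamma ((n : ℝ) / (b * (n : ℝ) ^ α) + 1)) ^
            (((n : ℝ) - ℓ) / n))
      Filter.atTop (nhds 0) := by
  have hℓ1 : (1 : ℝ) ≤ ℓ := by exact_mod_cast hℓ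
  have hx := tendsto_div_rpow_sub_div_atTop hb hα
  set t : ℕ → ℝ := fun n => ((n : ℝ) - ℓ) / n
  set x : ℕ → ℝ := fun n => (n : ℝ) / (b * (n : ℝ) ^ α)
  have hdecay : Tendsto (fun n : ℕ => -((x n - n / 2 - 1) * (t n * (1 - t n) / 2)))
      atTop atBot := by
    refine tendsto_neg_atTop_atBot.comp ((hx.atTop_mul_pos (by linarith)
      (tendsto_natCast_mul_mul_one_sub ℓ)).atTop_div_const two_pos |>.congr' ?_)
    filter_upwards [eventually_gt_atTop 0] with n hn
    simp only [t, x]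
    field_simp
  have hbound : ∀ᶠ n : ℕ in atTop,
      logGammaDefect (t n) (x n) - logGammaDefect (t n) (n / 2) ≤
        -((x n - n / 2 - 1) * (t n * (1 - t n) / 2)) := by
    filter_upwards [eventually_gt_atTop ℓ, hx.eventually_ge_atTop 0] with n hn hxn
    have hn : (ℓ : ℝ) + 1 ≤ n := by exact_mod_cast hn
    have hn0 : (0 : ℝ) < n := by linarith
    refine logGammaDefect_sub_le (div_pos (by linarith) hn0) ((div_le_one hn0).2 (by linarith))
      (by linarith) ?_
    have := (le_div_iff₀ hn0).1 hxn
    linarith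
  refine (tendsto_exp_atBot.comp (tendsto_atBot_mono' atTop hbound hdecay)).congr' ?_
  filter_upwards [eventually_gt_atTop ℓ] with n hn
  have hn : (ℓ : ℝ) < n := by exact_mod_cast hn
  have hn0 : (0 : ℝ) < n := by linarith
  have hr : 0 < b * (n : ℝ) ^ α := by positivity
  rw [Function.comp_apply, ← Gamma_ratio_eq_exp_logGammaDefect
    (div_pos (by linarith) hn0).le (by positivity) (div_pos hn0 hr).le]
  congr 4 <;> field_simp
end

section
/- Let b > 0, let ℓ ≥ 0 be a fixed integer, and set r = b (constant in n). Define G_ℓ(n) = (Γ((n-ℓ)/r + 1)/Γ((n-ℓ)/2 + 1)) · (Γ(n/2 + 1)/Γ(n/r + 1))^{(n-ℓ)/n}. Then lim_{n→∞} G_ℓ(n) = e^{-ℓ/b + ℓ/2}. -/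
open MeasureTheory Real Filter
open Asymptotics Topology
open scoped Nat

/-!
With `m = n - ℓ`, the logarithm of the sectional volume is `D_b(n) - D_2(n)`, where
`D_c(n) = log Γ(m/c + 1) - (m/n) log Γ(n/c + 1)`. Log-convexity of `Γ` squeezes
`log Γ(x + s) - log Γ(x)` between `s log (x - 1)` and `s log (x + s)`, so it is `s log x + o(1)`;
Stirling's formula, transported from factorials to real arguments by the same squeeze, gives
`log Γ(y + 1) = y log y - y + o(y)`. The two `log (n/c)` terms then cancel in `D_c(n)`,
leaving `D_c(n) → -ℓ/c`.
-/

namespace Real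

lemma log_Gamma_add_one {x : ℝ} (hx : 0 < x) :
    log (Gamma (x + 1)) = log (Gamma x) + log x := by
  rw [Gamma_add_one hx.ne', log_mul hx.ne' (Gamma_pos_of_pos hx).ne', add_comm]

lemma mul_log_sub_one_le_log_Gamma_add_sub_log_Gamma {x s : ℝ} (hx : 1 < x) (hs : 0 ≤ s) :
    s * log (x - 1) ≤ log (Gamma (x + s)) - log (Gamma x) := by
  rcases hs.eq_or_lt with rfl | hs
  · simp
  have hslope := convexOn_log_Gamma.slope_mono_adjacent (x := x - 1) (y := x) (z := x + s)
    (by simp; linarith) (by simp; linarith) (by linarith) (by linarith)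
  have hrec : log (Gamma x) - log (Gamma (x - 1)) = log (x - 1) := by
    rw [sub_eq_iff_eq_add']
    simpa using log_Gamma_add_one (x := x - 1) (by linarith)
  simp only [Function.comp_apply, sub_sub_cancel, div_one, add_sub_cancel_left, hrec] at hslope
  rwa [le_div_iff₀ hs, mul_comm] at hslope

lemma log_Gamma_add_sub_log_Gamma_le {x s : ℝ} (hx : 0 < x) (hs : 0 ≤ s) :
    log (Gamma (x + s)) - log (Gamma x) ≤ s * log (x + s) := by
  rcases hs.eq_or_lt with rfl | hs
  · simp
  have hslope := convexOn_log_Gamma.slope_mono_adjacent (x := x) (y := x + s) (z := x + s + 1)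
    (by simp; linarith) (by simp; linarith) (by linarith) (by linarith)
  simp only [Function.comp_apply, add_sub_cancel_left, div_one,
    log_Gamma_add_one (show 0 < x + s by linarith)] at hslope
  rw [div_le_iff₀ hs] at hslope
  linarith

lemma tendsto_log_Gamma_add_sub_log_Gamma_sub_mul_log {s : ℝ} (hs : 0 ≤ s) :
    Tendsto (fun x => log (Gamma (x + s)) - log (Gamma x) - s * log x) atTop (𝓝 0) := by
  have hlower := (tendsto_log_comp_add_sub_log (-1)).const_mul s
  have hupper := (tendsto_log_comp_add_sub_log s).const_mul s
  rw [mul_zero] at hlower hupper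
  refine tendsto_of_tendsto_of_tendsto_of_le_of_le' hlower hupper ?_ ?_
  · filter_upwards [eventually_gt_atTop 1] with x hx
    have := mul_log_sub_one_le_log_Gamma_add_sub_log_Gamma hx hs
    rw [← sub_eq_add_neg]
    linarith
  · filter_upwards [eventually_gt_atTop 0] with x hx
    have := log_Gamma_add_sub_log_Gamma_le hx hs
    linarith

/-- The tangent line inequality at `a` for the convex function `x ↦ x * log x - x`. -/
lemma mul_log_sub_le_mul_log_self_sub {a c : ℝ} (ha : 0 < a) (hc : 0 < c) :
    c * log a - a ≤ c * log c - c := by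
  have h := mul_le_mul_of_nonneg_left (log_le_sub_one_of_pos (div_pos ha hc)) hc.le
  rw [log_div ha.ne' hc.ne', mul_sub_one, mul_div_cancel₀ _ hc.ne'] at h
  linarith

lemma isLittleO_log_factorial_sub :
    (fun n : ℕ => log n ! - (n * log n - n)) =o[atTop] (fun n => (n : ℝ)) := by
  have hseq : (fun n => log (Stirling.stirlingSeq n)) =o[atTop] (fun n => (n : ℝ)) :=
    ((Stirling.tendsto_stirlingSeq_sqrt_pi.log (by positivity)).isBigO_one ℝ).trans_isLittleO
      ((isLittleO_one_left_iff ℝ).2 (tendsto_norm_atTop_atTop.comp tendsto_natCast_atTop_atTop))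
  have htwo : Tendsto (fun n : ℕ => 2 * (n : ℝ)) atTop atTop :=
    tendsto_natCast_atTop_atTop.const_mul_atTop two_pos
  have hlog : (fun n : ℕ => 1 / 2 * log (2 * n)) =o[atTop] (fun n => (n : ℝ)) :=
    ((isLittleO_log_id_atTop.comp_tendsto htwo).trans_isBigO
      ((isBigO_refl _ _).const_mul_left 2)).const_mul_left _
  refine (hseq.add hlog).congr' ?_ EventuallyEq.rfl
  filter_upwards [eventually_ne_atTop 0] with n hn
  rw [Stirling.log_stirlingSeq_formula, log_div (by positivity) (exp_ne_zero 1), log_exp]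
  ring

lemma abs_log_Gamma_add_one_sub_log_factorial_floor_le {y : ℝ} (hy : 1 ≤ y) :
    |(log (Gamma (y + 1)) - (y * log y - y)) -
      (log ⌊y⌋₊ ! - (⌊y⌋₊ * log ⌊y⌋₊ - ⌊y⌋₊))| ≤ log (y + 1) := by
  set k := ⌊y⌋₊
  have hk : (1 : ℝ) ≤ k := by exact_mod_cast Nat.le_floor (by exact_mod_cast hy)
  have hky : (k : ℝ) ≤ y := Nat.floor_le (by linarith)
  have hyk : y < k + 1 := Nat.lt_floor_add_one y
  set s := y - k
  have hGamma_lower := mul_log_sub_one_le_log_Gamma_add_sub_log_Gamma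
    (x := k + 1) (s := s) (by linarith) (by linarith)
  have hGamma_upper := log_Gamma_add_sub_log_Gamma_le (x := k + 1) (s := s) (by linarith)
    (by linarith)
  have hy1 : (k : ℝ) + 1 + s = y + 1 := by ring
  rw [hy1, Gamma_nat_eq_factorial, add_sub_cancel_right] at hGamma_lower
  rw [hy1, Gamma_nat_eq_factorial] at hGamma_upper
  have hφ_lower := mul_log_sub_le_mul_log_self_sub (a := k) (c := y) (by linarith) (by linarith)
  have hφ_upper := mul_log_sub_le_mul_log_self_sub (a := y) (c := k) (by linarith) (by linarith)
  have hlog_k : 0 ≤ s * log k := mul_nonneg (by linarith) (log_nonneg hk)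
  have hlog_y : s * log y ≤ log (y + 1) := by
    have : log y ≤ log (y + 1) := log_le_log (by linarith) (by linarith)
    nlinarith [log_nonneg hy]
  have hlog_y1 : s * log (y + 1) ≤ log (y + 1) := by
    nlinarith [log_nonneg (show (1 : ℝ) ≤ y + 1 by linarith)]
  rw [abs_le]
  constructor <;> nlinarith

lemma isLittleO_log_Gamma_add_one_sub :
    (fun y => log (Gamma (y + 1)) - (y * log y - y)) =o[atTop] id := by
  have hfloor : (fun y : ℝ => (⌊y⌋₊ : ℝ)) =O[atTop] id :=
    IsBigO.of_bound 1 <| (eventually_ge_atTop 0).mono fun y hy => by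
      simpa [abs_of_nonneg hy] using Nat.floor_le hy
  have hnat := (isLittleO_log_factorial_sub.comp_tendsto tendsto_nat_floor_atTop).trans_isBigO
    hfloor
  have hshift : Tendsto (fun y : ℝ => y + 1) atTop atTop :=
    tendsto_atTop_add_const_right _ 1 tendsto_id
  have hlog : (fun y : ℝ => log (y + 1)) =o[atTop] id :=
    (isLittleO_log_id_atTop.comp_tendsto hshift).trans_isBigO
      ((isBigO_refl _ _).add (isLittleO_const_id_atTop 1).isBigO)
  have hdiff : (fun y => (log (Gamma (y + 1)) - (y * log y - y)) -
      (log ⌊y⌋₊ ! - (⌊y⌋₊ * log ⌊y⌋₊ - ⌊y⌋₊))) =o[atTop] id :=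
    (IsBigO.of_bound 1 <| (eventually_ge_atTop 1).mono fun y hy => by
      simpa [abs_of_nonneg (log_nonneg (show (1 : ℝ) ≤ y + 1 by linarith))] using
        abs_log_Gamma_add_one_sub_log_factorial_floor_le hy).trans_isLittleO hlog
  simpa using hdiff.add hnat

lemma tendsto_log_Gamma_sub_add_one_sub_mul_log_Gamma_add_one {s : ℝ} (hs : 0 ≤ s) :
    Tendsto (fun y => log (Gamma (y - s + 1)) - (1 - s / y) * log (Gamma (y + 1)))
      atTop (𝓝 (-s)) := by
  have hshift : Tendsto (fun y : ℝ => y + (1 - s)) atTop atTop :=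
    tendsto_atTop_add_const_right _ _ tendsto_id
  have hratio := (tendsto_log_Gamma_add_sub_log_Gamma_sub_mul_log hs).comp hshift
  have hstirling := isLittleO_log_Gamma_add_one_sub.tendsto_div_nhds_zero
  have hlog := tendsto_log_comp_add_sub_log (1 - s)
  have hsum := ((hratio.neg.add (hstirling.const_mul s)).sub (hlog.const_mul s)).sub_const s
  simp only [neg_zero, mul_zero, add_zero, sub_zero, zero_sub] at hsum
  refine hsum.congr' ?_
  filter_upwards [eventually_gt_atTop 0] with y hy
  simp only [Function.comp_apply, id]
  rw [show y + (1 - s) + s = y + 1 by ring, show y - s + 1 = y + (1 - s) by ring]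
  field_simp
  ring

lemma div_mul_div_rpow_eq_exp {A B C D : ℝ} (e : ℝ) (hA : 0 < A) (hB : 0 < B) (hC : 0 < C)
    (hD : 0 < D) :
    A / B * (C / D) ^ e = exp ((log A - e * log D) - (log B - e * log C)) := by
  rw [← exp_log (by positivity : 0 < A / B * (C / D) ^ e),
    log_mul (by positivity) (by positivity), log_div hA.ne' hB.ne', log_rpow (by positivity),
    log_div hC.ne' hD.ne']
  ring_nf

end Real

/-- For `b > 0`, constant distance exponent `r = b` and fixed `ℓ ≥ 0`, the expected sectional
volume `G_ℓ(n) = (Γ((n-ℓ)/r + 1)/Γ((n-ℓ)/2 + 1)) (Γ(n/2 + 1)/Γ(n/r + 1))^{(n-ℓ)/n}`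
tends to `e^{-ℓ/b + ℓ/2}`. -/
theorem limit_sectional_volume_alpha_zero (b : ℝ) (hb : 0 < b) (ℓ : ℕ) :
    Filter.Tendsto
      (fun n : ℕ =>
        (Real.Gamma (((n : ℝ) - ℓ) / b + 1) / Real.Gamma (((n : ℝ) - ℓ) / 2 + 1)) *
          (Real.Gamma ((n : ℝ) / 2 + 1) / Real.Gamma ((n : ℝ) / b + 1)) ^
            (((n : ℝ) - ℓ) / n))
      Filter.atTop (nhds (Real.exp (-(ℓ : ℝ) / b + (ℓ : ℝ) / 2))) := by
  have hsection : ∀ c : ℝ, 0 < c → Tendsto (fun n : ℕ =>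
      log (Gamma (((n : ℝ) - ℓ) / c + 1)) - ((n - ℓ) / n) * log (Gamma (n / c + 1)))
      atTop (𝓝 (-(ℓ / c))) := by
    intro c hc
    refine ((tendsto_log_Gamma_sub_add_one_sub_mul_log_Gamma_add_one (s := ℓ / c)
      (by positivity)).comp (tendsto_natCast_atTop_atTop.atTop_div_const hc)).congr' ?_
    filter_upwards [eventually_ne_atTop 0] with n hn
    simp only [Function.comp_apply]
    congr 3 <;> field_simp
  have hlim := ((hsection b hb).sub (hsection 2 two_pos)).rexp
  rw [show -((ℓ : ℝ) / b) - -(ℓ / 2) = -ℓ / b + ℓ / 2 by ring] at hlim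
  refine hlim.congr' ?_
  filter_upwards [eventually_ge_atTop ℓ] with n hn
  have hnℓ : (0 : ℝ) ≤ n - ℓ := sub_nonneg.2 (by exact_mod_cast hn)
  rw [div_mul_div_rpow_eq_exp] <;> exact Gamma_pos_of_pos (by positivity)
end
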